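/- arXiv:1808.10091 — 2 statements merged into one kernel-verified Lean document; each statement's English description precedes it below -/
import Mathlib

section
/- Under the same hypotheses (A : X → GL(d,ℝ) β-Hölder, with ‖𝒜ⁿ_x‖ ≤ K_ε e^{εn} and ‖(𝒜ⁿ_x)^{−1}‖ ≤ K_ε e^{εn} for all x, n and every ε > 0), the stable holonomies H^s_{x,y} = lim_{n→∞} (𝒜ⁿ_y)^{−1} 𝒜ⁿ_x (defined for y ∈ W^s_loc(x)) satisfy: (H1) H^s_{x,x} = I, and H^s_{y,z} · H^s_{x,y} = H^s_{x,z} whenever y, z ∈ W^s_loc(x); in particular (H^s_{x,y})^{−1} = H^s_{y,x}; and (H2) H^s_{x,y} = (𝒜ⁿ_y)^{−1} · H^s_{fⁿx, fⁿy} · 𝒜ⁿ_x for every n ∈ ℕ. -/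
open scoped Classical

/-- The subshift of finite type determined by a 0-1 transition matrix `M`:
the set of two-sided sequences all of whose transitions are allowed by `M`. -/
def SFT {k : ℕ} (M : Matrix (Fin k) (Fin k) ℕ) : Set (ℤ → Fin k) :=
  {x | ∀ n : ℤ, M (x n) (x (n + 1)) = 1}

/-- The (left) shift map `(f x)_n = x_{n+1}`. -/
def shift {k : ℕ} (x : ℤ → Fin k) : ℤ → Fin k := fun n => x (n + 1)

/-- `sep x y = min {|i| : x_i ≠ y_i}` (defined for `x ≠ y`). -/
noncomputable def sep {k : ℕ} (x y : ℤ → Fin k) : ℕ :=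
  sInf {m : ℕ | ∃ i : ℤ, i.natAbs = m ∧ x i ≠ y i}

/-- The distance `d(x,y) = λ^{sep x y}` for `x ≠ y`, and `d(x,x) = 0`. -/
noncomputable def dSFT {k : ℕ} (lam : ℝ) (x y : ℤ → Fin k) : ℝ :=
  if x = y then 0 else lam ^ sep x y

open scoped MatrixGroups Matrix.Norms.L2Operator

/-- The `GL(d,ℝ)`-valued cocycle generated by `A` over the shift:
`𝒜⁰_x = I` and `𝒜ⁿ⁺¹_x = A(fⁿx) · 𝒜ⁿ_x`. -/
def coc {k d : ℕ} (A : (ℤ → Fin k) → GL (Fin d) ℝ) :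
    (ℤ → Fin k) → ℕ → GL (Fin d) ℝ
  | _, 0 => 1
  | x, n + 1 => A (shift^[n] x) * coc A x n

/-! The holonomy `H^s_{x,y}` is the limit of `(𝒜ⁿ_y)⁻¹ 𝒜ⁿ_x`, and these products telescope:
`((𝒜ⁿ_z)⁻¹ 𝒜ⁿ_y)((𝒜ⁿ_y)⁻¹ 𝒜ⁿ_x) = (𝒜ⁿ_z)⁻¹ 𝒜ⁿ_x`. Continuity of multiplication and uniqueness
of limits turn this into (H1). For (H2), the cocycle identity `𝒜^{m+n}_x = 𝒜^m_{fⁿx} 𝒜ⁿ_x`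
writes the tail of the sequence defining `H^s_{x,y}` as `(𝒜ⁿ_y)⁻¹ · (sequence for H^s_{fⁿx,fⁿy}) · 𝒜ⁿ_x`. -/

open Filter Topology

theorem Filter.Tendsto.units_inv_mul_trans {R ι : Type*} [Monoid R] [TopologicalSpace R]
    [ContinuousMul R] {l : Filter ι} {a b c : ι → Rˣ} {g h : R}
    (hcb : Tendsto (fun n => ((c n)⁻¹ * b n : Rˣ) : ι → R) l (𝓝 h))
    (hba : Tendsto (fun n => ((b n)⁻¹ * a n : Rˣ) : ι → R) l (𝓝 g)) :
    Tendsto (fun n => ((c n)⁻¹ * a n : Rˣ) : ι → R) l (𝓝 (h * g)) := by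
  simpa [mul_assoc] using hcb.mul hba

theorem shift_iter_apply {k : ℕ} (x : ℤ → Fin k) (n : ℕ) (i : ℤ) :
    shift^[n] x i = x (i + n) := by
  induction n generalizing x with
  | zero => simp
  | succ n ih =>
    rw [Function.iterate_succ_apply, ih, shift]
    push_cast
    ring_nf

theorem shift_iter_mem_SFT {k : ℕ} {M : Matrix (Fin k) (Fin k) ℕ} {x : ℤ → Fin k}
    (hx : x ∈ SFT M) (n : ℕ) : shift^[n] x ∈ SFT M := fun i => by
  simpa only [shift_iter_apply, add_right_comm] using hx (i + n)

theorem shift_iter_eq_of_nonneg {k : ℕ} {x y : ℤ → Fin k} (hyx : ∀ i : ℤ, 0 ≤ i → y i = x i)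
    (n : ℕ) : ∀ i : ℤ, 0 ≤ i → shift^[n] y i = shift^[n] x i := fun i hi => by
  simpa only [shift_iter_apply] using hyx (i + n) (by positivity)

theorem coc_add {k d : ℕ} (A : (ℤ → Fin k) → GL (Fin d) ℝ) (x : ℤ → Fin k) (m n : ℕ) :
    coc A x (m + n) = coc A (shift^[n] x) m * coc A x n := by
  induction m with
  | zero => simp [coc]
  | succ m ih =>
    rw [add_right_comm, coc, coc, ih, ← Function.iterate_add_apply, mul_assoc]

theorem coc_inv_mul_coc_add {k d : ℕ} (A : (ℤ → Fin k) → GL (Fin d) ℝ) (x y : ℤ → Fin k)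
    (m n : ℕ) :
    (coc A y (m + n))⁻¹ * coc A x (m + n) =
      (coc A y n)⁻¹ * ((coc A (shift^[n] y) m)⁻¹ * coc A (shift^[n] x) m) * coc A x n := by
  simp only [coc_add, mul_inv_rev, mul_assoc]

theorem tendsto_coc_inv_mul_coc_of_shift {k d : ℕ} (A : (ℤ → Fin k) → GL (Fin d) ℝ)
    {x y : ℤ → Fin k} (n : ℕ) {H : Matrix (Fin d) (Fin d) ℝ}
    (h : Tendsto (fun m : ℕ => (((coc A (shift^[n] y) m)⁻¹ * coc A (shift^[n] x) m :
      GL (Fin d) ℝ) : Matrix (Fin d) (Fin d) ℝ)) atTop (𝓝 H)) :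
    Tendsto (fun m : ℕ => (((coc A y m)⁻¹ * coc A x m : GL (Fin d) ℝ) :
      Matrix (Fin d) (Fin d) ℝ)) atTop
      (𝓝 ((((coc A y n)⁻¹ : GL (Fin d) ℝ) : Matrix (Fin d) (Fin d) ℝ) * H *
        ((coc A x n : GL (Fin d) ℝ) : Matrix (Fin d) (Fin d) ℝ))) := by
  refine (tendsto_add_atTop_iff_nat n).1 ?_
  simp only [coc_inv_mul_coc_add, Units.val_mul]
  exact (h.const_mul _).mul_const _

theorem stmt_10_general (k d : ℕ) (M : Matrix (Fin k) (Fin k) ℕ)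
    (A : (ℤ → Fin k) → GL (Fin d) ℝ)
    (Hs : (ℤ → Fin k) → (ℤ → Fin k) → Matrix (Fin d) (Fin d) ℝ)
    (hHs : ∀ x ∈ SFT M, ∀ y ∈ SFT M, (∀ i : ℤ, 0 ≤ i → y i = x i) →
      Filter.Tendsto
        (fun n : ℕ => (((coc A y n)⁻¹ * coc A x n : GL (Fin d) ℝ) : Matrix (Fin d) (Fin d) ℝ))
        Filter.atTop (nhds (Hs x y))) :
    -- (H1) `H^s_{x,x} = I` and the composition rule, hence `(H^s_{x,y})⁻¹ = H^s_{y,x}`: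
    (∀ x ∈ SFT M, Hs x x = 1) ∧
    (∀ x ∈ SFT M, ∀ y ∈ SFT M, ∀ z ∈ SFT M,
      (∀ i : ℤ, 0 ≤ i → y i = x i) → (∀ i : ℤ, 0 ≤ i → z i = x i) →
      Hs y z * Hs x y = Hs x z) ∧
    (∀ x ∈ SFT M, ∀ y ∈ SFT M, (∀ i : ℤ, 0 ≤ i → y i = x i) →
      Hs x y * Hs y x = 1 ∧ Hs y x * Hs x y = 1) ∧
    -- (H2) `H^s_{x,y} = (𝒜ⁿ_y)⁻¹ H^s_{fⁿx, fⁿy} 𝒜ⁿ_x` for all `n`: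
    (∀ x ∈ SFT M, ∀ y ∈ SFT M, (∀ i : ℤ, 0 ≤ i → y i = x i) → ∀ n : ℕ,
      Hs x y = (((coc A y n)⁻¹ : GL (Fin d) ℝ) : Matrix (Fin d) (Fin d) ℝ)
        * Hs (shift^[n] x) (shift^[n] y)
        * ((coc A x n : GL (Fin d) ℝ) : Matrix (Fin d) (Fin d) ℝ)) := by
  have hid : ∀ x ∈ SFT M, Hs x x = 1 := fun x hx =>
    tendsto_nhds_unique (hHs x hx x hx fun _ _ => rfl) (by simp)
  have hcomp : ∀ x ∈ SFT M, ∀ y ∈ SFT M, ∀ z ∈ SFT M,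
      (∀ i : ℤ, 0 ≤ i → y i = x i) → (∀ i : ℤ, 0 ≤ i → z i = x i) →
      Hs y z * Hs x y = Hs x z := fun x hx y hy z hz hyx hzx =>
    tendsto_nhds_unique
      ((hHs y hy z hz fun i hi => (hzx i hi).trans (hyx i hi).symm).units_inv_mul_trans
        (hHs x hx y hy hyx))
      (hHs x hx z hz hzx)
  refine ⟨hid, hcomp, fun x hx y hy hyx => ⟨?_, ?_⟩, fun x hx y hy hyx n => ?_⟩
  · simpa only [hid y hy] using hcomp y hy x hx y hy (fun i hi => (hyx i hi).symm) fun _ _ => rfl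
  · simpa only [hid x hx] using hcomp x hx y hy x hx hyx fun _ _ => rfl
  · exact tendsto_nhds_unique (hHs x hx y hy hyx) <| tendsto_coc_inv_mul_coc_of_shift A n <|
      hHs _ (shift_iter_mem_SFT hx n) _ (shift_iter_mem_SFT hy n) (shift_iter_eq_of_nonneg hyx n)

/-- Properties (H1) and (H2) of the stable holonomies `H^s_{x,y} = lim (𝒜ⁿ_y)⁻¹ 𝒜ⁿ_x`
of a β-Hölder `GL(d,ℝ)`-valued cocycle with sub-exponential growth over a subshift
of finite type. -/
theorem stmt_10 (k d : ℕ) (hk : 1 ≤ k) (M : Matrix (Fin k) (Fin k) ℕ)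
    (hM : ∀ i j, M i j = 0 ∨ M i j = 1)
    (lam : ℝ) (hlam0 : 0 < lam) (hlam1 : lam < 1)
    (A : (ℤ → Fin k) → GL (Fin d) ℝ)
    (c₀ β : ℝ) (hc₀ : 0 < c₀) (hβ0 : 0 < β) (hβ1 : β ≤ 1)
    (hHolder : ∀ x ∈ SFT M, ∀ y ∈ SFT M,
      ‖(A x : Matrix (Fin d) (Fin d) ℝ) - (A y : Matrix (Fin d) (Fin d) ℝ)‖
        ≤ c₀ * dSFT lam x y ^ β)
    (hgrowth : ∀ ε : ℝ, 0 < ε → ∃ K : ℝ, 1 ≤ K ∧ ∀ x ∈ SFT M, ∀ n : ℕ,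
      ‖(coc A x n : Matrix (Fin d) (Fin d) ℝ)‖ ≤ K * Real.exp (ε * n) ∧
      ‖(((coc A x n)⁻¹ : GL (Fin d) ℝ) : Matrix (Fin d) (Fin d) ℝ)‖ ≤ K * Real.exp (ε * n))
    (Hs : (ℤ → Fin k) → (ℤ → Fin k) → Matrix (Fin d) (Fin d) ℝ)
    (hHs : ∀ x ∈ SFT M, ∀ y ∈ SFT M, (∀ i : ℤ, 0 ≤ i → y i = x i) →
      Filter.Tendsto
        (fun n : ℕ => (((coc A y n)⁻¹ * coc A x n : GL (Fin d) ℝ) : Matrix (Fin d) (Fin d) ℝ))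
        Filter.atTop (nhds (Hs x y))) :
    -- (H1) `H^s_{x,x} = I` and the composition rule, hence `(H^s_{x,y})⁻¹ = H^s_{y,x}`:
    (∀ x ∈ SFT M, Hs x x = 1) ∧
    (∀ x ∈ SFT M, ∀ y ∈ SFT M, ∀ z ∈ SFT M,
      (∀ i : ℤ, 0 ≤ i → y i = x i) → (∀ i : ℤ, 0 ≤ i → z i = x i) →
      Hs y z * Hs x y = Hs x z) ∧
    (∀ x ∈ SFT M, ∀ y ∈ SFT M, (∀ i : ℤ, 0 ≤ i → y i = x i) →
      Hs x y * Hs y x = 1 ∧ Hs y x * Hs x y = 1) ∧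
    -- (H2) `H^s_{x,y} = (𝒜ⁿ_y)⁻¹ H^s_{fⁿx, fⁿy} 𝒜ⁿ_x` for all `n`:
    (∀ x ∈ SFT M, ∀ y ∈ SFT M, (∀ i : ℤ, 0 ≤ i → y i = x i) → ∀ n : ℕ,
      Hs x y = (((coc A y n)⁻¹ : GL (Fin d) ℝ) : Matrix (Fin d) (Fin d) ℝ)
        * Hs (shift^[n] x) (shift^[n] y)
        * ((coc A x n : GL (Fin d) ℝ) : Matrix (Fin d) (Fin d) ℝ)) :=
  stmt_10_general k d M A Hs hHs
end

section
/- Let A : X → GL(d,ℝ) satisfy: (i) A is β-Hölder, i.e. there are c₀ > 0 and β ∈ (0,1] with ‖A(x) − A(y)‖ ≤ c₀ d(x,y)^β for all x, y ∈ X; and (ii) for every ε > 0 there is K_ε ≥ 1 such that ‖𝒜ⁿ_x‖ ≤ K_ε e^{ε|n|} and ‖(𝒜ⁿ_x)^{−1}‖ ≤ K_ε e^{ε|n|} for all x ∈ X and n ∈ ℤ. Then there is a constant C such that for every x ∈ X and every y ∈ W^u_loc(x): the limit H^u_{x,y} = lim_{n→∞} (𝒜^{−n}_y)^{−1} 𝒜^{−n}_x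 exists in GL(d,ℝ), and ‖(𝒜^{−n}_y)^{−1} 𝒜^{−n}_x − I‖ ≤ C d(x,y)^β for all n ∈ ℕ; in particular ‖H^u_{x,y} − I‖ ≤ C d(x,y)^β. -/
open scoped Classical

open scoped MatrixGroups Matrix.Norms.L2Operator

/-- The inverse shift map `(f⁻¹ x)_n = x_{n-1}`. -/
def shiftInv {k : ℕ} (x : ℤ → Fin k) : ℤ → Fin k := fun n => x (n - 1)

/-- The extension of the cocycle to `ℤ`: `𝒜⁻ⁿ_x = (𝒜ⁿ_{f⁻ⁿx})⁻¹`. -/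
def cocZ {k d : ℕ} (A : (ℤ → Fin k) → GL (Fin d) ℝ) (x : ℤ → Fin k) (n : ℤ) :
    GL (Fin d) ℝ :=
  if 0 ≤ n then coc A x n.toNat else (coc A (shiftInv^[(-n).toNat] x) (-n).toNat)⁻¹

/-!
Along backward orbits, `f⁻ⁿx` and `f⁻ⁿy` for `y ∈ W^u_loc(x)` approach each other like `λⁿ`.
Hence, by Hölder continuity, the `n`-th increment of `Hₙ = (𝒜⁻ⁿ_y)⁻¹ 𝒜⁻ⁿ_x`, namely
`(𝒜⁻ⁿ_y)⁻¹ (A(f⁻ⁿ⁻¹y) - A(f⁻ⁿ⁻¹x)) A(f⁻ⁿ⁻¹x)⁻¹ 𝒜⁻ⁿ_x`, has norm at most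
`c₀ K_ε³ e^{(2n+1)ε} λ^{β(n+1)} d(x,y)^β`. Choosing `ε` with `e^{2ε} λ^β < 1` makes the
increments geometric, which gives the limit and the uniform bound `C d(x,y)^β`. The limit is
invertible because the inverses `Hₙ⁻¹`, the same construction with `x` and `y` swapped,
converge as well.
-/

open Filter Topology

theorem dist_le_of_le_geometric {α : Type*} [PseudoMetricSpace α] {f : ℕ → α} {C r : ℝ}
    (hr : r < 1) (hu : ∀ n, dist (f n) (f (n + 1)) ≤ C * r ^ n) (n : ℕ) :
    dist (f 0) (f n) ≤ C / (1 - r) := by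
  refine (dist_le_range_sum_of_dist_le (d := fun i => C * r ^ i) n fun _ => hu _).trans ?_
  exact sum_le_hasSum (Finset.range n) (fun i _ => dist_nonneg.trans (hu i))
    (aux_hasSum_of_le_geometric hr hu)

theorem exists_tendsto_of_norm_sub_le_geometric {E : Type*} [SeminormedAddCommGroup E]
    [CompleteSpace E] {u : ℕ → E} {C r : ℝ} (hr : r < 1)
    (hu : ∀ n, ‖u (n + 1) - u n‖ ≤ C * r ^ n) :
    ∃ L, Tendsto u atTop (𝓝 L) ∧ ‖L - u 0‖ ≤ C / (1 - r) ∧ ∀ n, ‖u n - u 0‖ ≤ C / (1 - r) := by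
  have hdist : ∀ n, dist (u n) (u (n + 1)) ≤ C * r ^ n := by simpa only [dist_eq_norm'] using hu
  obtain ⟨L, hL⟩ := cauchySeq_tendsto_of_complete (cauchySeq_of_le_geometric r C hr hdist)
  refine ⟨L, hL, ?_, fun n => ?_⟩
  · simpa only [dist_eq_norm'] using dist_le_of_le_geometric_of_tendsto₀ r C hr hdist hL
  · simpa only [dist_eq_norm'] using dist_le_of_le_geometric hr hdist n

theorem Units.exists_val_eq_of_tendsto {ι R : Type*} [Monoid R] [TopologicalSpace R]
    [ContinuousMul R] [T2Space R] {l : Filter ι} [l.NeBot] {u : ι → Rˣ} {a b : R}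
    (ha : Tendsto (fun i => (u i : R)) l (𝓝 a))
    (hb : Tendsto (fun i => (((u i)⁻¹ : Rˣ) : R)) l (𝓝 b)) :
    ∃ v : Rˣ, (v : R) = a := by
  have hab : a * b = 1 :=
    tendsto_nhds_unique (ha.mul hb) (by simpa only [Units.mul_inv] using tendsto_const_nhds)
  have hba : b * a = 1 :=
    tendsto_nhds_unique (hb.mul ha) (by simpa only [Units.inv_mul] using tendsto_const_nhds)
  exact ⟨⟨a, b, hab, hba⟩, rfl⟩

theorem Units.norm_val_mul_mul_inv_mul_sub_le {R : Type*} [SeminormedRing R] (p q a b : Rˣ) :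
    ‖((p * a * b⁻¹ * q : Rˣ) : R) - ((p * q : Rˣ) : R)‖
      ≤ ‖(p : R)‖ * ‖(a : R) - b‖ * ‖((b⁻¹ : Rˣ) : R)‖ * ‖(q : R)‖ := by
  have h : ((p * a * b⁻¹ * q : Rˣ) : R) - ((p * q : Rˣ) : R)
      = p * (a - b) * ((b⁻¹ : Rˣ) : R) * q := by
    simp only [Units.val_mul, mul_sub, sub_mul, mul_assoc, Units.mul_inv, mul_one]
  rw [h]
  refine (norm_mul_le _ _).trans ?_
  gcongr
  exact norm_mul₃_le

theorem exists_pos_exp_sq_mul_lt_one {r : ℝ} (hr : r < 1) : ∃ ε > 0, Real.exp ε ^ 2 * r < 1 := by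
  have h : ∀ᶠ ε in 𝓝 (0 : ℝ), Real.exp ε ^ 2 * r < 1 :=
    (show Continuous fun ε => Real.exp ε ^ 2 * r by fun_prop).continuousAt.eventually_lt
      continuousAt_const (by simpa using hr)
  obtain ⟨ε, hε, hε0⟩ := ((h.filter_mono nhdsWithin_le_nhds).and
    (self_mem_nhdsWithin (s := Set.Ioi 0))).exists
  exact ⟨ε, hε0, hε⟩

section Shift

variable {k : ℕ}

theorem shiftInv_iterate_apply (x : ℤ → Fin k) (m : ℕ) (i : ℤ) :
    (shiftInv^[m] x) i = x (i - m) := by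
  induction m generalizing i with
  | zero => simp
  | succ m ih =>
    rw [Function.iterate_succ_apply', shiftInv, ih]
    congr 1
    push_cast
    ring

theorem shift_shiftInv (x : ℤ → Fin k) : shift (shiftInv x) = x :=
  funext fun i => by simp [shift, shiftInv]

theorem shiftInv_injective : Function.Injective (shiftInv (k := k)) :=
  Function.LeftInverse.injective shift_shiftInv

theorem shift_shiftInv_iterate_succ (x : ℤ → Fin k) (m : ℕ) :
    shift (shiftInv^[m + 1] x) = shiftInv^[m] x := by
  rw [Function.iterate_succ_apply', shift_shiftInv]

theorem shiftInv_iterate_mem_SFT {M : Matrix (Fin k) (Fin k) ℕ} {x : ℤ → Fin k}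
    (hx : x ∈ SFT M) (m : ℕ) : shiftInv^[m] x ∈ SFT M := by
  intro n
  rw [shiftInv_iterate_apply, shiftInv_iterate_apply, ← sub_add_eq_add_sub]
  exact hx (n - m)

theorem dSFT_nonneg {lam : ℝ} (hlam : 0 ≤ lam) (x y : ℤ → Fin k) : 0 ≤ dSFT lam x y := by
  unfold dSFT
  split_ifs
  exacts [le_rfl, pow_nonneg hlam _]

theorem sep_add_le_sep_shiftInv_iterate {x y : ℤ → Fin k} (hagree : ∀ i : ℤ, i ≤ 0 → y i = x i)
    {m : ℕ} (hne : shiftInv^[m] x ≠ shiftInv^[m] y) :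
    sep x y + m ≤ sep (shiftInv^[m] x) (shiftInv^[m] y) := by
  obtain ⟨i₀, hi₀⟩ := Function.ne_iff.mp hne
  refine le_csInf ⟨i₀.natAbs, i₀, rfl, hi₀⟩ ?_
  rintro _ ⟨i, rfl, hi⟩
  rw [shiftInv_iterate_apply, shiftInv_iterate_apply] at hi
  have hpos : 0 < i - m := by
    by_contra! h
    exact hi (hagree _ h).symm
  have : sep x y ≤ (i - m).natAbs := Nat.sInf_le ⟨i - m, rfl, hi⟩
  omega

theorem dSFT_shiftInv_iterate_le {lam : ℝ} (hlam0 : 0 ≤ lam) (hlam1 : lam ≤ 1)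
    {x y : ℤ → Fin k} (hagree : ∀ i : ℤ, i ≤ 0 → y i = x i) (m : ℕ) :
    dSFT lam (shiftInv^[m] x) (shiftInv^[m] y) ≤ lam ^ m * dSFT lam x y := by
  by_cases hxy : x = y
  · simp [dSFT, hxy]
  have hne : shiftInv^[m] x ≠ shiftInv^[m] y := (shiftInv_injective.iterate m).ne hxy
  rw [dSFT, if_neg hne, dSFT, if_neg hxy, ← pow_add, add_comm m]
  exact pow_le_pow_of_le_one hlam0 hlam1 (sep_add_le_sep_shiftInv_iterate hagree hne)

end Shift

section Cocycle

variable {k d : ℕ} (A : (ℤ → Fin k) → GL (Fin d) ℝ)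

theorem coc_succ_eq_mul (x : ℤ → Fin k) (n : ℕ) :
    coc A x (n + 1) = coc A (shift x) n * A x := by
  induction n with
  | zero => simp [coc]
  | succ n ih =>
    rw [coc, ih, coc, Function.iterate_succ_apply, mul_assoc]

theorem cocZ_one (x : ℤ → Fin k) : cocZ A x 1 = A x := by
  simp [cocZ, coc]

theorem cocZ_neg_natCast (x : ℤ → Fin k) (n : ℕ) :
    cocZ A x (-(n : ℤ)) = (coc A (shiftInv^[n] x) n)⁻¹ := by
  rcases n with _ | n
  · simp [cocZ, coc]
  · rw [cocZ, if_neg (by omega), neg_neg, Int.toNat_natCast]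

theorem cocZ_neg_succ (x : ℤ → Fin k) (n : ℕ) :
    cocZ A x (-((n + 1 : ℕ) : ℤ)) = (A (shiftInv^[n + 1] x))⁻¹ * cocZ A x (-(n : ℤ)) := by
  rw [cocZ_neg_natCast, cocZ_neg_natCast, coc_succ_eq_mul, shift_shiftInv_iterate_succ,
    mul_inv_rev]

def unstableHolonomyApprox (x y : ℤ → Fin k) (n : ℕ) : GL (Fin d) ℝ :=
  (cocZ A y (-(n : ℤ)))⁻¹ * cocZ A x (-(n : ℤ))

theorem unstableHolonomyApprox_zero (x y : ℤ → Fin k) : unstableHolonomyApprox A x y 0 = 1 := by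
  simp [unstableHolonomyApprox, cocZ, coc]

theorem unstableHolonomyApprox_inv (x y : ℤ → Fin k) (n : ℕ) :
    (unstableHolonomyApprox A x y n)⁻¹ = unstableHolonomyApprox A y x n := by
  simp [unstableHolonomyApprox]

theorem unstableHolonomyApprox_succ (x y : ℤ → Fin k) (n : ℕ) :
    unstableHolonomyApprox A x y (n + 1) = (cocZ A y (-(n : ℤ)))⁻¹ * A (shiftInv^[n + 1] y)
      * (A (shiftInv^[n + 1] x))⁻¹ * cocZ A x (-(n : ℤ)) := by
  simp only [unstableHolonomyApprox, cocZ_neg_succ, mul_inv_rev, inv_inv, mul_assoc]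

end Cocycle

theorem norm_unstableHolonomyApprox_succ_sub_le {k d : ℕ} {M : Matrix (Fin k) (Fin k) ℕ}
    {A : (ℤ → Fin k) → GL (Fin d) ℝ} {lam c₀ β ε K : ℝ} (hlam0 : 0 ≤ lam) (hlam1 : lam ≤ 1)
    (hc₀ : 0 ≤ c₀) (hβ : 0 ≤ β)
    (hHolder : ∀ x ∈ SFT M, ∀ y ∈ SFT M,
      ‖(A x : Matrix (Fin d) (Fin d) ℝ) - (A y : Matrix (Fin d) (Fin d) ℝ)‖
        ≤ c₀ * dSFT lam x y ^ β)
    (hgrowth : ∀ x ∈ SFT M, ∀ n : ℤ,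
      ‖(cocZ A x n : Matrix (Fin d) (Fin d) ℝ)‖ ≤ K * Real.exp (ε * n.natAbs) ∧
      ‖(((cocZ A x n)⁻¹ : GL (Fin d) ℝ) : Matrix (Fin d) (Fin d) ℝ)‖
        ≤ K * Real.exp (ε * n.natAbs))
    {x y : ℤ → Fin k} (hx : x ∈ SFT M) (hy : y ∈ SFT M)
    (hagree : ∀ i : ℤ, i ≤ 0 → y i = x i) (n : ℕ) :
    ‖(unstableHolonomyApprox A x y (n + 1) : Matrix (Fin d) (Fin d) ℝ)
        - unstableHolonomyApprox A x y n‖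
      ≤ c₀ * K ^ 3 * Real.exp ε * lam ^ β * dSFT lam x y ^ β
        * (Real.exp ε ^ 2 * lam ^ β) ^ n := by
  set x' := shiftInv^[n + 1] x
  set y' := shiftInv^[n + 1] y
  have hx' : x' ∈ SFT M := shiftInv_iterate_mem_SFT hx _
  have hP := (hgrowth y hy (-(n : ℤ))).2
  have hQ := (hgrowth x hx (-(n : ℤ))).1
  have hB := (hgrowth x' hx' 1).2
  rw [Int.natAbs_neg, Int.natAbs_natCast, mul_comm ε, Real.exp_nat_mul] at hP hQ
  rw [cocZ_one, Int.natAbs_one, Nat.cast_one, mul_one] at hB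
  have hD : ‖(A y' : Matrix (Fin d) (Fin d) ℝ) - A x'‖
      ≤ c₀ * ((lam ^ β) ^ (n + 1) * dSFT lam x y ^ β) := by
    have hdist := dSFT_shiftInv_iterate_le hlam0 hlam1 hagree (n + 1)
    calc ‖(A y' : Matrix (Fin d) (Fin d) ℝ) - A x'‖
        = ‖(A x' : Matrix (Fin d) (Fin d) ℝ) - A y'‖ := norm_sub_rev _ _
      _ ≤ c₀ * dSFT lam x' y' ^ β := hHolder x' hx' y' (shiftInv_iterate_mem_SFT hy _)
      _ ≤ c₀ * (lam ^ (n + 1) * dSFT lam x y) ^ β := by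
        gcongr
        exact dSFT_nonneg hlam0 _ _
      _ = c₀ * ((lam ^ β) ^ (n + 1) * dSFT lam x y ^ β) := by
        rw [Real.mul_rpow (by positivity) (dSFT_nonneg hlam0 _ _), Real.rpow_pow_comm hlam0]
  rw [unstableHolonomyApprox_succ, unstableHolonomyApprox]
  calc _ ≤ _ := Units.norm_val_mul_mul_inv_mul_sub_le _ _ _ _
    _ ≤ (K * Real.exp ε ^ n) * (c₀ * ((lam ^ β) ^ (n + 1) * dSFT lam x y ^ β))
          * (K * Real.exp ε) * (K * Real.exp ε ^ n) := by
        have hP0 := (norm_nonneg _).trans hP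
        have hD0 := (norm_nonneg _).trans hD
        gcongr
        exact mul_nonneg (mul_nonneg hP0 hD0) ((norm_nonneg _).trans hB)
    _ = _ := by ring

theorem stmt_15_general (k d : ℕ) (M : Matrix (Fin k) (Fin k) ℕ)
    (lam : ℝ) (hlam0 : 0 < lam) (hlam1 : lam < 1)
    (A : (ℤ → Fin k) → GL (Fin d) ℝ)
    (c₀ β : ℝ) (hc₀ : 0 < c₀) (hβ0 : 0 < β)
    (hHolder : ∀ x ∈ SFT M, ∀ y ∈ SFT M,
      ‖(A x : Matrix (Fin d) (Fin d) ℝ) - (A y : Matrix (Fin d) (Fin d) ℝ)‖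
        ≤ c₀ * dSFT lam x y ^ β)
    (hgrowth : ∀ ε : ℝ, 0 < ε → ∃ K : ℝ, 1 ≤ K ∧ ∀ x ∈ SFT M, ∀ n : ℤ,
      ‖(cocZ A x n : Matrix (Fin d) (Fin d) ℝ)‖ ≤ K * Real.exp (ε * n.natAbs) ∧
      ‖(((cocZ A x n)⁻¹ : GL (Fin d) ℝ) : Matrix (Fin d) (Fin d) ℝ)‖
        ≤ K * Real.exp (ε * n.natAbs)) :
    ∃ C : ℝ, ∀ x ∈ SFT M, ∀ y ∈ SFT M, (∀ i : ℤ, i ≤ 0 → y i = x i) →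
      (∃ Hu : GL (Fin d) ℝ,
        Filter.Tendsto
          (fun n : ℕ =>
            (((cocZ A y (-(n : ℤ)))⁻¹ * cocZ A x (-(n : ℤ)) : GL (Fin d) ℝ) :
              Matrix (Fin d) (Fin d) ℝ))
          Filter.atTop (nhds (Hu : Matrix (Fin d) (Fin d) ℝ)) ∧
        ‖(Hu : Matrix (Fin d) (Fin d) ℝ) - 1‖ ≤ C * dSFT lam x y ^ β) ∧
      ∀ n : ℕ,
        ‖(((cocZ A y (-(n : ℤ)))⁻¹ * cocZ A x (-(n : ℤ)) : GL (Fin d) ℝ) :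
            Matrix (Fin d) (Fin d) ℝ) - 1‖ ≤ C * dSFT lam x y ^ β := by
  obtain ⟨ε, hε, hr⟩ := exists_pos_exp_sq_mul_lt_one (Real.rpow_lt_one hlam0.le hlam1 hβ0)
  obtain ⟨K, -, hK⟩ := hgrowth ε hε
  have hstep := fun x hx y hy hagree => norm_unstableHolonomyApprox_succ_sub_le
    hlam0.le hlam1.le hc₀.le hβ0.le hHolder hK (x := x) (y := y) hx hy hagree
  refine ⟨c₀ * K ^ 3 * Real.exp ε * lam ^ β / (1 - Real.exp ε ^ 2 * lam ^ β),
    fun x hx y hy hagree => ?_⟩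
  obtain ⟨L, hL, hL1, hn1⟩ := exists_tendsto_of_norm_sub_le_geometric
    (u := fun n => (unstableHolonomyApprox A x y n : Matrix (Fin d) (Fin d) ℝ)) hr
    (hstep x hx y hy hagree)
  obtain ⟨L', hL', -⟩ := exists_tendsto_of_norm_sub_le_geometric
    (u := fun n => (unstableHolonomyApprox A y x n : Matrix (Fin d) (Fin d) ℝ)) hr
    (hstep y hy x hx fun i hi => (hagree i hi).symm)
  obtain ⟨Hu, rfl⟩ := Units.exists_val_eq_of_tendsto hL
    (hL'.congr fun n => by rw [unstableHolonomyApprox_inv])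
  simp only [unstableHolonomyApprox_zero, Units.val_one, div_mul_eq_mul_div] at hL1 hn1 ⊢
  exact ⟨⟨Hu, hL, hL1⟩, hn1⟩

/-- Existence and Hölder estimates of unstable holonomies
`H^u_{x,y} = lim_{n→∞} (𝒜⁻ⁿ_y)⁻¹ 𝒜⁻ⁿ_x` for a β-Hölder `GL(d,ℝ)`-valued cocycle with
sub-exponential growth over a subshift of finite type (Proposition 3.3). -/
theorem stmt_15 (k d : ℕ) (hk : 1 ≤ k) (M : Matrix (Fin k) (Fin k) ℕ)
    (hM : ∀ i j, M i j = 0 ∨ M i j = 1)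
    (lam : ℝ) (hlam0 : 0 < lam) (hlam1 : lam < 1)
    (A : (ℤ → Fin k) → GL (Fin d) ℝ)
    (c₀ β : ℝ) (hc₀ : 0 < c₀) (hβ0 : 0 < β) (hβ1 : β ≤ 1)
    (hHolder : ∀ x ∈ SFT M, ∀ y ∈ SFT M,
      ‖(A x : Matrix (Fin d) (Fin d) ℝ) - (A y : Matrix (Fin d) (Fin d) ℝ)‖
        ≤ c₀ * dSFT lam x y ^ β)
    (hgrowth : ∀ ε : ℝ, 0 < ε → ∃ K : ℝ, 1 ≤ K ∧ ∀ x ∈ SFT M, ∀ n : ℤ,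
      ‖(cocZ A x n : Matrix (Fin d) (Fin d) ℝ)‖ ≤ K * Real.exp (ε * n.natAbs) ∧
      ‖(((cocZ A x n)⁻¹ : GL (Fin d) ℝ) : Matrix (Fin d) (Fin d) ℝ)‖
        ≤ K * Real.exp (ε * n.natAbs)) :
    ∃ C : ℝ, ∀ x ∈ SFT M, ∀ y ∈ SFT M, (∀ i : ℤ, i ≤ 0 → y i = x i) →
      (∃ Hu : GL (Fin d) ℝ,
        Filter.Tendsto
          (fun n : ℕ =>
            (((cocZ A y (-(n : ℤ)))⁻¹ * cocZ A x (-(n : ℤ)) : GL (Fin d) ℝ) :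
              Matrix (Fin d) (Fin d) ℝ))
          Filter.atTop (nhds (Hu : Matrix (Fin d) (Fin d) ℝ)) ∧
        ‖(Hu : Matrix (Fin d) (Fin d) ℝ) - 1‖ ≤ C * dSFT lam x y ^ β) ∧
      ∀ n : ℕ,
        ‖(((cocZ A y (-(n : ℤ)))⁻¹ * cocZ A x (-(n : ℤ)) : GL (Fin d) ℝ) :
            Matrix (Fin d) (Fin d) ℝ) - 1‖ ≤ C * dSFT lam x y ^ β :=
  stmt_15_general k d M lam hlam0 hlam1 A c₀ β hc₀ hβ0 hHolder hgrowth
end
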